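/- Deletion–contraction determinant identity (Eq. (delcondet)): Let n ≥ 2, let W : Matrix (Fin n) (Fin n) ℝ be any matrix, let a := 0 and b := 1 in Fin n, and let W_hid agree with W except that (W_hid) a b = (W_hid) b a = 0, (W_hid) a a = W a a + W b a, (W_hid) b b = W b b + W a b. Then the determinant of the (n−1)×(n−1) matrix obtained from W by deleting row b and column a equals the determinant of the matrix obtained from W_hid by deleting row b and column a, plus W a b times the determinant of the (n−2)×(n−2) matrix obtained from W by deleting rows a, b and columns a, b. -/
import Mathlib


open Matrix

/-- Deletion–contraction determinant identity (Eq. (delcondet)). -/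
theorem deletion_contraction_det {n : ℕ}
    (W Whid : Matrix (Fin (n + 2)) (Fin (n + 2)) ℝ)
    (a b : Fin (n + 2)) (ha : a = 0) (hb : b = 1)
    (hH1 : Whid a b = 0) (hH2 : Whid b a = 0)
    (hH3 : Whid a a = W a a + W b a)
    (hH4 : Whid b b = W b b + W a b)
    (hH5 : ∀ i j, ¬(i = a ∧ j = b) → ¬(i = b ∧ j = a) → ¬(i = a ∧ j = a) →
      ¬(i = b ∧ j = b) → Whid i j = W i j) :
    (W.submatrix b.succAbove a.succAbove).det
      = (Whid.submatrix b.succAbove a.succAbove).det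
        + W a b * (W.submatrix (fun i : Fin n => i.succ.succ)
            (fun i : Fin n => i.succ.succ)).det := by
  subst ha hb
  set M := Whid.submatrix (1 : Fin (n+2)).succAbove (0 : Fin (n+2)).succAbove with hM
  have hs0 : (1 : Fin (n+2)).succAbove 0 = 0 := by simp [Fin.succAbove]
  have hss : ∀ i : Fin n, (1 : Fin (n+2)).succAbove i.succ = i.succ.succ := by
    intro i; simp [Fin.succAbove, Fin.lt_def]
  have hsuc1 : ∀ j : Fin (n+1), j.succ = (1 : Fin (n+2)) → j = 0 := by
    intro j h
    exact Fin.succ_injective _ (h.trans Fin.succ_zero_eq_one.symm)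
  have hW_eq : ∀ (i j : Fin (n+1)), ¬(i = 0 ∧ j = 0) →
      Whid ((1 : Fin (n+2)).succAbove i) j.succ
        = W ((1 : Fin (n+2)).succAbove i) j.succ := by
    intro i j h
    apply hH5
    · rintro ⟨h1, h2⟩
      exact h ⟨Fin.succAbove_right_injective (h1.trans hs0.symm), hsuc1 j h2⟩
    · rintro ⟨_, h2⟩; exact Fin.succ_ne_zero j h2
    · rintro ⟨_, h2⟩; exact Fin.succ_ne_zero j h2
    · rintro ⟨h1, _⟩; exact Fin.succAbove_ne 1 i h1
  have key : W.submatrix (1 : Fin (n+2)).succAbove (0 : Fin (n+2)).succAbove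
      = M.updateRow 0 (M 0 + Pi.single (0 : Fin (n+1)) (W 0 1)) := by
    ext i j
    rcases eq_or_ne i 0 with rfl | hi
    · simp only [updateRow_self, Pi.add_apply, Pi.single_apply]
      rcases eq_or_ne j 0 with rfl | hj
      · simp only [if_pos rfl, if_true, hM, submatrix_apply, hs0, Fin.succAbove_zero,
          Fin.succ_zero_eq_one, hH1, zero_add]
      · simp only [if_neg hj, add_zero, hM, submatrix_apply, Fin.succAbove_zero]
        exact (hW_eq 0 j (by tauto)).symm
    · rw [updateRow_ne hi]
      simp only [hM, submatrix_apply, Fin.succAbove_zero]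
      exact (hW_eq i j (by tauto)).symm
  rw [key, det_updateRow_add, updateRow_eq_self]
  congr 1
  rw [det_succ_row_zero]
  rw [Finset.sum_eq_single (0 : Fin (n+1))]
  · have hsub : ((M.updateRow 0 (Pi.single (0 : Fin (n+1)) (W 0 1))).submatrix
        Fin.succ (Fin.succ : Fin n → Fin (n+1)))
        = W.submatrix (fun i : Fin n => i.succ.succ) (fun i : Fin n => i.succ.succ) := by
      ext i j
      simp only [submatrix_apply, updateRow_ne (Fin.succ_ne_zero i), hM,
        Fin.succAbove_zero, hss]
      refine hH5 _ _ ?_ ?_ ?_ ?_ <;> rintro ⟨h1, h2⟩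
      · exact Fin.succ_ne_zero _ (hsuc1 _ h2)
      · exact Fin.succ_ne_zero _ (Fin.succ_injective _ (h1.trans Fin.succ_zero_eq_one.symm))
      · exact Fin.succ_ne_zero _ h2
      · exact Fin.succ_ne_zero _ (hsuc1 _ h2)
    simp [hsub]
  · intro j _ hj
    simp [updateRow_self, Pi.single_apply, if_neg hj]
  · intro h; exact absurd (Finset.mem_univ _) h
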